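/- arXiv:1106.6224 — 7 statements merged into one kernel-verified Lean document; each statement's English description precedes it below -/
import Mathlib

section
/- If the spark of a matrix Φ ∈ ℝ^{M×N} is greater than 2K, then for each vector y ∈ ℝ^M there is at most one K-sparse vector x ∈ ℝ^N with y = Φx. -/
open Matrix Finset

/-- The spark of a matrix: the smallest number of columns that are linearly
dependent (`⊤` if the columns are linearly independent). -/
noncomputable def spark {M N : ℕ} (Φ : Matrix (Fin M) (Fin N) ℝ) : ℕ∞ :=
  sInf {k : ℕ∞ | ∃ s : Finset (Fin N), (s.card : ℕ∞) = k ∧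
    ¬ LinearIndependent ℝ (fun i : s => Φ.transpose i.1)}

/-- A vector is `K`-sparse if it has at most `K` nonzero entries. -/
def KSparse {N : ℕ} (K : ℕ) (x : Fin N → ℝ) : Prop :=
  (Finset.univ.filter fun i => x i ≠ 0).card ≤ K

/-- If `spark Φ > 2K` then for every `y` there is at most one `K`-sparse `x`
with `y = Φ x`. -/
theorem spark_gt_two_K_unique {M N K : ℕ} (Φ : Matrix (Fin M) (Fin N) ℝ)
    (h : (2 * K : ℕ∞) < spark Φ) (y : Fin M → ℝ) :
    ∀ x x' : Fin N → ℝ, KSparse K x → KSparse K x' →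
      Φ.mulVec x = y → Φ.mulVec x' = y → x = x' := by
  intro x x' hx hx' hΦx hΦx'
  by_contra hne
  set d : Fin N → ℝ := x - x' with hd
  have hdne : d ≠ 0 := sub_ne_zero.mpr hne
  have hΦd : Φ.mulVec d = 0 := by
    rw [hd, Matrix.mulVec_sub, hΦx, hΦx', sub_self]
  set s : Finset (Fin N) := Finset.univ.filter fun i => d i ≠ 0 with hs
  -- card bound
  have hsub : s ⊆ (Finset.univ.filter fun i => x i ≠ 0) ∪
      (Finset.univ.filter fun i => x' i ≠ 0) := by
    intro i hi
    simp only [hs, Finset.mem_filter, Finset.mem_union, Finset.mem_univ, true_and] at hi ⊢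
    by_contra hc
    push_neg at hc
    exact hi (by simp [hd, hc.1, hc.2])
  have hcard : s.card ≤ 2 * K := by
    calc s.card ≤ ((Finset.univ.filter fun i => x i ≠ 0) ∪
        (Finset.univ.filter fun i => x' i ≠ 0)).card := Finset.card_le_card hsub
      _ ≤ (Finset.univ.filter fun i => x i ≠ 0).card +
          (Finset.univ.filter fun i => x' i ≠ 0).card := Finset.card_union_le _ _
      _ ≤ K + K := add_le_add hx hx'
      _ = 2 * K := (two_mul K).symm
  -- linear dependence of columns in s
  have hdep : ¬ LinearIndependent ℝ (fun i : s => Φ.transpose i.1) := by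
    rw [Fintype.not_linearIndependent_iff]
    refine ⟨fun i => d i.1, ?_, ?_⟩
    · funext m
      have : ∑ i : s, d i.1 * Φ m i.1 = 0 := by
        have hsum : ∑ i ∈ s, d i * Φ m i = ∑ i : Fin N, d i * Φ m i := by
          refine Finset.sum_subset (Finset.subset_univ _) ?_
          intro i _ hi
          simp only [hs, Finset.mem_filter, Finset.mem_univ, true_and, not_not] at hi
          simp [hi]
        have h0 : Φ.mulVec d m = 0 := by rw [hΦd]; rfl
        rw [Matrix.mulVec, dotProduct] at h0
        rw [Finset.sum_coe_sort s (fun i => d i * Φ m i), hsum]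
        calc ∑ i : Fin N, d i * Φ m i = ∑ i : Fin N, Φ m i * d i := by
              simp [mul_comm]
          _ = 0 := h0
      simpa [Matrix.transpose_apply, smul_eq_mul] using this
    · obtain ⟨i, hi⟩ : ∃ i, d i ≠ 0 := by
        by_contra hc
        push_neg at hc
        exact hdne (funext hc)
      exact ⟨⟨i, by simp [hs, hi]⟩, hi⟩
  have hmem : (s.card : ℕ∞) ∈ {k : ℕ∞ | ∃ t : Finset (Fin N), (t.card : ℕ∞) = k ∧
      ¬ LinearIndependent ℝ (fun i : t => Φ.transpose i.1)} := ⟨s, rfl, hdep⟩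
  have hle : spark Φ ≤ (s.card : ℕ∞) := sInf_le hmem
  have : spark Φ ≤ (2 * K : ℕ∞) := le_trans hle (by exact_mod_cast hcard)
  exact absurd (lt_of_lt_of_le h this) (lt_irrefl _)
end

section
/- Conversely, if spark(Φ) ≤ 2K, then there exist two distinct K-sparse vectors x ≠ x' with Φx = Φx'. -/
open Matrix Finset

/-- If `spark Φ ≤ 2K` then there exist two distinct `K`-sparse vectors with the
same image under `Φ`. -/
theorem spark_le_two_K_not_unique {M N K : ℕ} (Φ : Matrix (Fin M) (Fin N) ℝ)
    (h : spark Φ ≤ (2 * K : ℕ∞)) :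
    ∃ x x' : Fin N → ℝ, KSparse K x ∧ KSparse K x' ∧ x ≠ x' ∧
      Φ.mulVec x = Φ.mulVec x' := by
  -- the defining set is nonempty
  set S := {k : ℕ∞ | ∃ s : Finset (Fin N), (s.card : ℕ∞) = k ∧
    ¬ LinearIndependent ℝ (fun i : s => Φ.transpose i.1)} with hS
  have hne : S.Nonempty := by
    by_contra hemp
    rw [Set.not_nonempty_iff_eq_empty] at hemp
    rw [spark, ← hS, hemp, sInf_empty] at h
    exact (lt_irrefl _ (lt_of_le_of_lt h (by exact_mod_cast WithTop.coe_lt_top (2*K)))).elim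
  have hmem : sInf S ∈ S := csInf_mem hne
  obtain ⟨s, hcard, hdep⟩ := hmem
  have hsle : (s.card : ℕ∞) ≤ (2 * K : ℕ∞) := hcard ▸ h
  have hsK : s.card ≤ 2 * K := by exact_mod_cast hsle
  -- extract a nonzero kernel vector supported on s
  rw [Fintype.not_linearIndependent_iff] at hdep
  obtain ⟨g, hg0, i0, hi0⟩ := hdep
  classical
  set c : Fin N → ℝ := fun i => if h : i ∈ s then g ⟨i, h⟩ else 0 with hc
  have hcs : ∀ i ∉ s, c i = 0 := fun i hi => by simp [hc, hi]
  have hΦc : Φ.mulVec c = 0 := by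
    funext j
    have := congrFun hg0 j
    simp only [Pi.smul_apply, Pi.zero_apply, Finset.sum_apply, smul_eq_mul] at this
    simp only [mulVec, dotProduct, Pi.zero_apply]
    rw [← Finset.sum_subset (Finset.subset_univ s) (by intro i _ hi; simp [hcs i hi])]
    rw [← this, ← Finset.sum_attach s (fun i => Φ j i * c i)]
    refine Finset.sum_congr rfl fun i _ => ?_
    simp [hc, i.2, transpose_apply, mul_comm]
  have hcne : c ≠ 0 := by
    intro hceq
    apply hi0
    have := congrFun hceq i0.1
    simpa [hc, i0.2] using this
  -- split s into two halves
  obtain ⟨s1, hs1sub, hs1card⟩ := Finset.exists_subset_card_eq (min_le_right K s.card)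
  set s2 := s \ s1 with hs2
  have hs1K : s1.card ≤ K := hs1card ▸ min_le_left _ _
  have hs2K : s2.card ≤ K := by
    have : s2.card = s.card - s1.card := Finset.card_sdiff_of_subset hs1sub
    rw [this, hs1card]
    rcases le_or_gt K s.card with hk | hk
    · rw [min_eq_left hk]; omega
    · rw [min_eq_right hk.le]; omega
  refine ⟨fun i => if i ∈ s1 then c i else 0, fun i => if i ∈ s2 then -c i else 0, ?_, ?_, ?_, ?_⟩
  · apply le_trans (Finset.card_le_card ?_) hs1K
    intro i hi
    simp only [Finset.mem_filter] at hi
    by_contra hni; exact hi.2 (by simp [hni])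
  · apply le_trans (Finset.card_le_card ?_) hs2K
    intro i hi
    simp only [Finset.mem_filter] at hi
    by_contra hni; exact hi.2 (by simp [hni])
  · intro heq
    apply hcne
    funext i
    have := congrFun heq i
    by_cases h1 : i ∈ s1
    · have h2 : i ∉ s2 := by simp [hs2, h1]
      simp only [if_pos h1, if_neg h2] at this
      simp [this]
    · by_cases h2 : i ∈ s2
      · simp only [if_neg h1, if_pos h2] at this
        simp [Pi.zero_apply]; linarith
      · have : i ∉ s := fun hi => h2 (Finset.mem_sdiff.mpr ⟨hi, h1⟩)
        simp [hcs i this]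
  · have hdiff : (fun i => if i ∈ s1 then c i else 0) - (fun i => if i ∈ s2 then -c i else 0) = c := by
      funext i
      by_cases h1 : i ∈ s1
      · have h2 : i ∉ s2 := by simp [hs2, h1]
        simp [h1, h2]
      · by_cases h2 : i ∈ s2
        · simp [h1, h2]
        · have : i ∉ s := fun hi => h2 (Finset.mem_sdiff.mpr ⟨hi, h1⟩)
          simp [h1, h2, hcs i this]
    have := Φ.mulVec_sub (fun i => if i ∈ s1 then c i else 0) (fun i => if i ∈ s2 then -c i else 0)
    rw [hdiff, hΦc] at this
    exact sub_eq_zero.mp this.symm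
end

section
/- For any matrix Φ with nonzero columns, spark(Φ) ≥ 1 + 1/μ(Φ), where μ(Φ) is the coherence of Φ, assuming μ(Φ) > 0. -/
open Matrix Finset

/-- The coherence of a matrix: the largest absolute normalized inner product
between two distinct columns. -/
noncomputable def coherence {M N : ℕ} (Φ : Matrix (Fin M) (Fin N) ℝ) : ℝ :=
  ⨆ p : {p : Fin N × Fin N // p.1 ≠ p.2},
    |∑ k, Φ k p.1.1 * Φ k p.1.2| /
      (Real.sqrt (∑ k, Φ k p.1.1 ^ 2) * Real.sqrt (∑ k, Φ k p.1.2 ^ 2))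

private lemma cauchy_abs {M : ℕ} (f g : Fin M → ℝ) :
    |∑ k, f k * g k| ≤ Real.sqrt (∑ k, f k ^ 2) * Real.sqrt (∑ k, g k ^ 2) := by
  have h := Finset.sum_mul_sq_le_sq_mul_sq Finset.univ f g
  have := Real.abs_le_sqrt h
  rwa [Real.sqrt_mul (by positivity)] at this

/-- `spark(Φ) ≥ 1 + 1/μ(Φ)`: every linearly dependent set of columns of `Φ`
has at least `1 + 1/μ(Φ)` elements. -/
theorem spark_ge_one_add_inv_coherence {M N : ℕ} (Φ : Matrix (Fin M) (Fin N) ℝ)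
    (hcols : ∀ j, (fun k => Φ k j) ≠ 0) (hμ : 0 < coherence Φ) :
    ∀ s : Finset (Fin N), ¬ LinearIndependent ℝ (fun i : s => Φ.transpose i.1) →
      1 + 1 / coherence Φ ≤ (s.card : ℝ) := by
  intro s hdep
  set μ := coherence Φ with hμdef
  -- column norms
  set n : Fin N → ℝ := fun j => Real.sqrt (∑ k, Φ k j ^ 2) with hn
  have hnpos : ∀ j, 0 < n j := by
    intro j
    apply Real.sqrt_pos.mpr
    obtain ⟨k, hk⟩ := Function.ne_iff.mp (hcols j)
    have hk' : Φ k j ≠ 0 := hk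
    exact Finset.sum_pos' (fun k _ => sq_nonneg _)
      ⟨k, Finset.mem_univ k, by positivity⟩
  -- coherence bound for distinct columns
  have hbdd : BddAbove (Set.range fun p : {p : Fin N × Fin N // p.1 ≠ p.2} =>
      |∑ k, Φ k p.1.1 * Φ k p.1.2| /
        (Real.sqrt (∑ k, Φ k p.1.1 ^ 2) * Real.sqrt (∑ k, Φ k p.1.2 ^ 2))) := by
    refine ⟨1, Set.forall_mem_range.mpr fun p => ?_⟩
    have hpos : 0 < n p.1.1 * n p.1.2 := mul_pos (hnpos _) (hnpos _)
    exact div_le_one_of_le₀ (cauchy_abs _ _) hpos.le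
  have hcoh : ∀ i j : Fin N, i ≠ j →
      |∑ k, Φ k i * Φ k j| ≤ μ * (n i * n j) := by
    intro i j hij
    have h := le_ciSup hbdd (⟨(i, j), hij⟩ : {p : Fin N × Fin N // p.1 ≠ p.2})
    have hpos : 0 < n i * n j := mul_pos (hnpos _) (hnpos _)
    rw [div_le_iff₀ hpos] at h
    exact h
  -- dependence relation
  obtain ⟨g, hg0, i₀, hi₀⟩ := Fintype.not_linearIndependent_iff.mp hdep
  -- scaled coefficients
  set c : s → ℝ := fun i => |g i| * n i.1 with hc
  obtain ⟨j0, -, hj0max⟩ := Finset.exists_max_image (Finset.univ : Finset s) c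
    ⟨i₀, Finset.mem_univ i₀⟩
  have hj0max' : ∀ i : s, c i ≤ c j0 := fun i => hj0max i (Finset.mem_univ i)
  have hcj0 : 0 < c j0 :=
    lt_of_lt_of_le (mul_pos (abs_pos.mpr hi₀) (hnpos _)) (hj0max' i₀)
  -- the key Gram identity
  have hfun : ∀ k, ∑ i : s, g i * Φ k i.1 = 0 := by
    intro k
    have := congrFun hg0 k
    simpa [Finset.sum_apply] using this
  have hgram : ∑ i : s, g i * ∑ k, Φ k j0.1 * Φ k i.1 = 0 := by
    calc ∑ i : s, g i * ∑ k, Φ k j0.1 * Φ k i.1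
        = ∑ i : s, ∑ k, Φ k j0.1 * (g i * Φ k i.1) := by
          refine Finset.sum_congr rfl fun i _ => ?_
          rw [Finset.mul_sum]
          exact Finset.sum_congr rfl fun k _ => by ring
      _ = ∑ k, ∑ i : s, Φ k j0.1 * (g i * Φ k i.1) := Finset.sum_comm
      _ = ∑ k, Φ k j0.1 * ∑ i : s, g i * Φ k i.1 :=
          Finset.sum_congr rfl fun k _ => (Finset.mul_sum _ _ _).symm
      _ = 0 := by simp only [hfun, mul_zero, Finset.sum_const_zero]
  -- isolate the j0 term
  have hsplit : g j0 * ∑ k, Φ k j0.1 * Φ k j0.1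
      = -∑ i ∈ Finset.univ.erase j0, g i * ∑ k, Φ k j0.1 * Φ k i.1 := by
    have := Finset.add_sum_erase Finset.univ
      (fun i : s => g i * ∑ k, Φ k j0.1 * Φ k i.1) (Finset.mem_univ j0)
    rw [hgram] at this
    beta_reduce at this
    linarith
  have hdiag : (∑ k, Φ k j0.1 * Φ k j0.1) = n j0.1 ^ 2 := by
    rw [hn]
    rw [Real.sq_sqrt (by positivity)]
    congr 1; ext k; ring
  -- chain of inequalities
  have hstep : |g j0| * n j0.1 ^ 2
      ≤ μ * n j0.1 * ((s.card : ℝ) - 1) * c j0 := by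
    calc |g j0| * n j0.1 ^ 2
        = |g j0 * ∑ k, Φ k j0.1 * Φ k j0.1| := by
          rw [hdiag, abs_mul, abs_of_nonneg (sq_nonneg (n j0.1))]
      _ = |∑ i ∈ Finset.univ.erase j0, g i * ∑ k, Φ k j0.1 * Φ k i.1| := by
          rw [hsplit, abs_neg]
      _ ≤ ∑ i ∈ Finset.univ.erase j0, |g i * ∑ k, Φ k j0.1 * Φ k i.1| :=
          Finset.abs_sum_le_sum_abs _ _
      _ ≤ ∑ i ∈ Finset.univ.erase j0, μ * n j0.1 * c i := by
          apply Finset.sum_le_sum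
          intro i hi
          have hne : j0.1 ≠ i.1 := fun h =>
            (Finset.mem_erase.mp hi).1 (Subtype.ext h.symm)
          rw [abs_mul]
          calc |g i| * |∑ k, Φ k j0.1 * Φ k i.1|
              ≤ |g i| * (μ * (n j0.1 * n i.1)) :=
                mul_le_mul_of_nonneg_left (hcoh _ _ hne) (abs_nonneg _)
            _ = μ * n j0.1 * c i := by rw [hc]; ring
      _ ≤ ∑ _i ∈ Finset.univ.erase j0, μ * n j0.1 * c j0 := by
          apply Finset.sum_le_sum
          intro i _
          exact mul_le_mul_of_nonneg_left (hj0max' i)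
            (by positivity)
      _ = μ * n j0.1 * ((s.card : ℝ) - 1) * c j0 := by
          rw [Finset.sum_const, nsmul_eq_mul, Finset.card_erase_of_mem (Finset.mem_univ _),
            Finset.card_univ, Fintype.card_coe]
          have hcard : 1 ≤ s.card := Finset.card_pos.mpr ⟨j0.1, j0.2⟩
          have : ((s.card - 1 : ℕ) : ℝ) = (s.card : ℝ) - 1 := by
            push_cast [Nat.cast_sub hcard]; ring
          rw [this]; ring
  -- conclude: c j0 ≤ μ (card - 1) c j0
  have hkey : c j0 ≤ μ * ((s.card : ℝ) - 1) * c j0 := by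
    have hnj0 : 0 < n j0.1 := hnpos _
    have h1 : |g j0| * n j0.1 ^ 2 = c j0 * n j0.1 := by rw [hc]; ring
    rw [h1] at hstep
    have h2 : μ * n j0.1 * ((s.card : ℝ) - 1) * c j0
        = (μ * ((s.card : ℝ) - 1) * c j0) * n j0.1 := by ring
    rw [h2] at hstep
    exact le_of_mul_le_mul_right hstep hnj0
  have hfinal : 1 ≤ μ * ((s.card : ℝ) - 1) := by
    have := le_of_mul_le_mul_right (by linarith [hkey] : 1 * c j0 ≤ (μ * ((s.card : ℝ) - 1)) * c j0) hcj0
    linarith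
  have : 1 / μ ≤ (s.card : ℝ) - 1 := by
    rw [div_le_iff₀ hμ]
    linarith [hfinal]
  linarith
end

section
/- MMV uniqueness (sufficiency): if X ∈ ℝ^{N×L} has row support Ω with |Ω| < (spark(Φ) − 1 + rank(X))/2, then X is the unique matrix with at most |Ω| nonzero rows satisfying Y = ΦX. -/
open Matrix Finset

open Classical in
/-- The row support of a matrix: the set of indices of its not-identically-zero
rows. -/
noncomputable def rowSupport {N L : ℕ} (X : Matrix (Fin N) (Fin L) ℝ) : Finset (Fin N) :=
  Finset.univ.filter fun i => ∃ j, X i j ≠ 0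

/-!
`Z = X - X'` is a nonzero matrix with `Φ Z = 0`. Its column space has dimension `rank Z` and
consists of kernel vectors of `Φ` supported on `supp Z`, so it contains a nonzero vector vanishing
on any `rank Z - 1` indices of `supp Z`; hence `spark Φ ≤ |supp Z| - rank Z + 1`. The rows of `X`
outside `supp X'` are rows of `Z`, so `rank X ≤ rank Z + |supp X ∩ supp X'|`. Adding up,
`spark Φ - 1 + rank X ≤ |supp X ∪ supp X'| + |supp X ∩ supp X'| = |supp X| + |supp X'|`,
which is at most `2 |supp X|`.
-/

theorem Submodule.exists_ne_zero_forall_eq_zero_of_card_lt_finrank {K ι : Type*} [Field K]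
    [Fintype ι] (V : Submodule K (ι → K)) (T : Finset ι) (hT : T.card < Module.finrank K V) :
    ∃ v ∈ V, v ≠ 0 ∧ ∀ i ∈ T, v i = 0 := by
  let restrict : V →ₗ[K] (T → K) := (LinearMap.funLeft K K ((↑) : T → ι)).comp V.subtype
  have hker : LinearMap.ker restrict ≠ ⊥ :=
    LinearMap.ker_ne_bot_of_finrank_lt (by simpa using hT)
  obtain ⟨⟨v, hvV⟩, hv, hv0⟩ := Submodule.exists_mem_ne_zero_of_ne_bot hker
  refine ⟨v, hvV, fun h => hv0 (Subtype.ext h), fun i hi => ?_⟩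
  simpa [restrict, LinearMap.funLeft] using congrFun (LinearMap.mem_ker.1 hv) ⟨i, hi⟩

section

variable {M N L : ℕ}

theorem spark_le_card_support_of_mulVec_eq_zero (Φ : Matrix (Fin M) (Fin N) ℝ)
    {w : Fin N → ℝ} (hw : w ≠ 0) (hΦw : Φ *ᵥ w = 0) :
    spark Φ ≤ (univ.filter fun i => w i ≠ 0).card := by
  refine sInf_le ⟨_, rfl, ?_⟩
  rw [Fintype.not_linearIndependent_iff]
  refine ⟨fun i => w i.1, ?_, ?_⟩
  · rw [Finset.sum_coe_sort (univ.filter fun i => w i ≠ 0) fun i => w i • Φᵀ i]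
    calc ∑ i ∈ univ with w i ≠ 0, w i • Φᵀ i = ∑ i, w i • Φᵀ i :=
          Finset.sum_filter_of_ne fun i _ h => left_ne_zero_of_smul h
      _ = Φ *ᵥ w := by simp [mulVec_eq_sum]
      _ = 0 := hΦw
  · obtain ⟨i, hi⟩ := Function.ne_iff.1 hw
    exact ⟨⟨i, by simpa using hi⟩, hi⟩

theorem mem_rowSupport {X : Matrix (Fin N) (Fin L) ℝ} {i : Fin N} :
    i ∈ rowSupport X ↔ X i ≠ 0 := by
  classical
  simp [rowSupport, Function.ne_iff]

theorem rowSupport_sub_subset (X X' : Matrix (Fin N) (Fin L) ℝ) :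
    rowSupport (X - X') ⊆ rowSupport X ∪ rowSupport X' := by
  intro i hi
  rw [mem_rowSupport] at hi
  rw [mem_union, mem_rowSupport, mem_rowSupport]
  by_contra! h
  exact hi (show X i - X' i = 0 by rw [h.1, h.2, sub_zero])

theorem rank_le_rank_sub_add_card_inter_rowSupport (X X' : Matrix (Fin N) (Fin L) ℝ) :
    X.rank ≤ (X - X').rank + (rowSupport X ∩ rowSupport X').card := by
  rw [rank_eq_finrank_span_row, rank_eq_finrank_span_row]
  let common : ↥(rowSupport X ∩ rowSupport X') → Fin L → ℝ := fun i => X i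
  have hspan : Submodule.span ℝ (Set.range X) ≤
      Submodule.span ℝ (Set.range (X - X')) ⊔ Submodule.span ℝ (Set.range common) := by
    rw [Submodule.span_le]
    rintro _ ⟨i, rfl⟩
    by_cases hi' : i ∈ rowSupport X'
    · by_cases hi : i ∈ rowSupport X
      · exact Submodule.mem_sup_right (Submodule.subset_span ⟨⟨i, mem_inter.2 ⟨hi, hi'⟩⟩, rfl⟩)
      · rw [not_not.1 (mt mem_rowSupport.2 hi)]
        exact zero_mem _
    · refine Submodule.mem_sup_left (Submodule.subset_span ⟨i, ?_⟩)
      change X i - X' i = X i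
      rw [not_not.1 (mt mem_rowSupport.2 hi'), sub_zero]
  exact (Submodule.finrank_mono hspan).trans <|
    (Submodule.finrank_add_le_finrank_add_finrank _ _).trans <|
      Nat.add_le_add_left ((finrank_range_le_card common).trans (Fintype.card_coe _).le) _

theorem rank_le_card_rowSupport (X : Matrix (Fin N) (Fin L) ℝ) :
    X.rank ≤ (rowSupport X).card := by
  simpa using rank_le_rank_sub_add_card_inter_rowSupport X X

theorem rank_pos_of_ne_zero {X : Matrix (Fin N) (Fin L) ℝ} (hX : X ≠ 0) : 0 < X.rank := by
  rw [rank_eq_finrank_span_row, Nat.pos_iff_ne_zero, Ne, Submodule.finrank_eq_zero,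
    Submodule.span_eq_bot]
  intro h
  exact hX (funext fun i => h _ ⟨i, rfl⟩)

theorem spark_add_rank_le_card_rowSupport_add_one (Φ : Matrix (Fin M) (Fin N) ℝ)
    {Z : Matrix (Fin N) (Fin L) ℝ} (hZ : Z ≠ 0) (hΦZ : Φ * Z = 0) :
    spark Φ + Z.rank ≤ (rowSupport Z).card + 1 := by
  obtain ⟨T, hTS, hTcard⟩ :=
    exists_subset_card_eq ((Nat.sub_le Z.rank 1).trans (rank_le_card_rowSupport Z))
  obtain ⟨_, ⟨c, rfl⟩, hw, hwT⟩ :=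
    (LinearMap.range Z.mulVecLin).exists_ne_zero_forall_eq_zero_of_card_lt_finrank T
      (by have := rank_pos_of_ne_zero hZ; rw [hTcard]; exact Nat.sub_lt this one_pos)
  have hΦw : Φ *ᵥ (Z *ᵥ c) = 0 := by rw [mulVec_mulVec, hΦZ, zero_mulVec]
  have hsupp : (univ.filter fun i => (Z *ᵥ c) i ≠ 0) ⊆ rowSupport Z \ T := by
    intro i hi
    rw [mem_filter] at hi
    refine mem_sdiff.2 ⟨mem_rowSupport.2 fun hZi => hi.2 ?_, fun hiT => hi.2 (hwT i hiT)⟩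
    change Z i ⬝ᵥ c = 0
    rw [hZi, zero_dotProduct]
  have hcard : (rowSupport Z \ T).card + Z.rank = (rowSupport Z).card + 1 := by
    have hpos := rank_pos_of_ne_zero hZ
    have hle := rank_le_card_rowSupport Z
    rw [card_sdiff_of_subset hTS, hTcard]
    omega
  calc spark Φ + Z.rank ≤ ((rowSupport Z \ T).card + Z.rank : ℕ) := by
        push_cast
        gcongr
        exact (spark_le_card_support_of_mulVec_eq_zero Φ hw hΦw).trans
          (by exact_mod_cast card_le_card hsupp)
    _ = (rowSupport Z).card + 1 := by exact_mod_cast hcard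

end

/-- MMV uniqueness (sufficiency): if
`|supp(X)| < (spark(Φ) − 1 + rank(X))/2`, then `X` is the unique matrix with
at most `|supp(X)|` nonzero rows satisfying `Y = Φ X`. -/
theorem mmv_uniqueness {M N L : ℕ} (Φ : Matrix (Fin M) (Fin N) ℝ)
    (X : Matrix (Fin N) (Fin L) ℝ)
    (h : (2 * (rowSupport X).card : ℕ∞) < spark Φ - 1 + (X.rank : ℕ∞)) :
    ∀ X' : Matrix (Fin N) (Fin L) ℝ,
      (rowSupport X').card ≤ (rowSupport X).card → Φ * X' = Φ * X → X' = X := by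
  intro X' hcard hΦ
  by_contra hne
  have hspark := spark_add_rank_le_card_rowSupport_add_one Φ (sub_ne_zero.2 (Ne.symm hne))
    (by rw [Matrix.mul_sub, hΦ, sub_self])
  have hrankX := rank_le_rank_sub_add_card_inter_rowSupport X X'
  have hrankZ := rank_le_card_rowSupport (X - X')
  have hsub := card_le_card (rowSupport_sub_subset X X')
  have hunion := card_union_add_card_inter (rowSupport X) (rowSupport X')
  obtain ⟨k, hk⟩ :=
    ENat.ne_top_iff_exists.1 (ne_top_of_le_ne_top (by simp) (le_self_add.trans hspark))
  rw [← hk] at h hspark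
  norm_cast at h hspark
  omega
end

section
/- ReMBo reduction: Let X̄ ∈ ℝ^{N×L} be a matrix with at most K nonzero rows and spark(Φ) > 2K, and let a ∈ ℝ^L be any vector. Then x̄ = X̄a is K-sparse and is the unique K-sparse solution of y = Φx where y = (ΦX̄)a. -/
open Matrix Finset

variable {M N L : ℕ}

lemma support_mulVec_subset_rowSupport (X : Matrix (Fin N) (Fin L) ℝ) (a : Fin L → ℝ) :
    (univ.filter fun i => (X *ᵥ a) i ≠ 0) ⊆ rowSupport X := by
  intro i hi
  simp only [rowSupport, mem_filter, mem_univ, true_and] at hi ⊢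
  contrapose! hi
  simp [mulVec, dotProduct, hi]

lemma KSparse.mulVec_of_card_rowSupport_le {K : ℕ} {X : Matrix (Fin N) (Fin L) ℝ}
    (hK : (rowSupport X).card ≤ K) (a : Fin L → ℝ) : KSparse K (X *ᵥ a) :=
  (card_le_card (support_mulVec_subset_rowSupport X a)).trans hK

lemma KSparse.sub {K K' : ℕ} {x y : Fin N → ℝ} (hx : KSparse K x) (hy : KSparse K' y) :
    KSparse (K + K') (x - y) := by
  have hsub : (univ.filter fun i => (x - y) i ≠ 0) ⊆
      (univ.filter fun i => x i ≠ 0) ∪ univ.filter fun i => y i ≠ 0 := by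
    intro i
    simp only [mem_union, mem_filter, mem_univ, true_and, Pi.sub_apply]
    contrapose!
    rintro ⟨hxi, hyi⟩
    rw [hxi, hyi, sub_zero]
  exact (card_le_card hsub).trans ((card_union_le _ _).trans (add_le_add hx hy))

/-- A nonzero vector in the kernel of `Φ` is a dependence relation among the columns of `Φ`
indexed by its support. -/
lemma spark_le_of_mulVec_eq_zero {k : ℕ} {Φ : Matrix (Fin M) (Fin N) ℝ} {d : Fin N → ℝ}
    (hd : KSparse k d) (hd0 : d ≠ 0) (hΦd : Φ *ᵥ d = 0) : spark Φ ≤ k := by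
  set s := univ.filter fun i => d i ≠ 0
  have hdep : ¬ LinearIndepOn ℝ (fun i => Φᵀ i) (s : Set (Fin N)) := by
    refine not_linearIndepOn_finset_iff.mpr ⟨d, ?_, ?_⟩
    · calc ∑ i ∈ s, d i • Φᵀ i = ∑ i, d i • Φᵀ i :=
            sum_filter_of_ne fun _ _ h => left_ne_zero_of_smul h
        _ = d ᵥ* Φᵀ := (vecMul_eq_sum d Φᵀ).symm
        _ = 0 := by rw [vecMul_transpose, hΦd]
    · obtain ⟨i, hi⟩ := Function.ne_iff.mp hd0
      exact ⟨i, by simpa [s] using hi, hi⟩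
  have hspark : spark Φ ≤ s.card := sInf_le ⟨s, rfl, hdep⟩
  exact hspark.trans (by exact_mod_cast hd)

lemma KSparse.eq_of_mulVec_eq {K : ℕ} {Φ : Matrix (Fin M) (Fin N) ℝ}
    (hspark : (2 * K : ℕ∞) < spark Φ) {x y : Fin N → ℝ} (hx : KSparse K x) (hy : KSparse K y)
    (h : Φ *ᵥ x = Φ *ᵥ y) : x = y := by
  by_contra hne
  have hle : spark Φ ≤ ((K + K : ℕ) : ℕ∞) :=
    spark_le_of_mulVec_eq_zero (hx.sub hy) (sub_ne_zero.mpr hne) (by rw [mulVec_sub, h, sub_self])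
  push_cast at hle
  exact hspark.not_ge (two_mul (K : ℕ∞) ▸ hle)

/-- ReMBo reduction: if `X̄` has at most `K` nonzero rows and `spark Φ > 2K`,
then for any vector `a`, `x̄ = X̄ a` is `K`-sparse and is the unique `K`-sparse
solution of `y = Φ x` with `y = (Φ X̄) a`. -/
theorem rembo_reduction {M N L K : ℕ} (Φ : Matrix (Fin M) (Fin N) ℝ)
    (Xb : Matrix (Fin N) (Fin L) ℝ) (hK : (rowSupport Xb).card ≤ K)
    (hspark : (2 * K : ℕ∞) < spark Φ) (a : Fin L → ℝ) :
    KSparse K (Xb.mulVec a) ∧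
    ∀ x : Fin N → ℝ, KSparse K x →
      Φ.mulVec x = (Φ * Xb).mulVec a → x = Xb.mulVec a := by
  have hXa : KSparse K (Xb *ᵥ a) := .mulVec_of_card_rowSupport_le hK a
  refine ⟨hXa, fun x hx hΦx => hx.eq_of_mulVec_eq hspark hXa ?_⟩
  rw [hΦx, mulVec_mulVec]
end

section
/- Conservation of mutual coherence under Kronecker products: for orthonormal bases Φ_d, Ψ_d of ℝ^{N_d}, d = 1,...,D, the mutual coherence satisfies μ(Φ₁⊗...⊗Φ_D, Ψ₁⊗...⊗Ψ_D) = ∏_{d=1}^D μ(Φ_d, Ψ_d). (Case D = 2 suffices.) -/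
open Matrix Finset Kronecker

/-- The mutual coherence of two orthonormal bases (given as the columns of two
matrices): the largest absolute inner product between a column of `Φ` and a
column of `Ψ`. -/
noncomputable def mutualCoherence {m n₁ n₂ : Type*} [Fintype m]
    (Φ : Matrix m n₁ ℝ) (Ψ : Matrix m n₂ ℝ) : ℝ :=
  ⨆ p : n₁ × n₂, |∑ k, Φ k p.1 * Ψ k p.2|

private lemma ciSup_mul_ciSup {α β : Type*} [Finite α] [Finite β]
    [Nonempty α] [Nonempty β] (f : α → ℝ) (g : β → ℝ)
    (hf : ∀ a, 0 ≤ f a) (hg : ∀ b, 0 ≤ g b) :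
    (⨆ p : α × β, f p.1 * g p.2) = (⨆ a, f a) * (⨆ b, g b) := by
  obtain ⟨a₀, ha₀⟩ := Finite.exists_max f
  obtain ⟨b₀, hb₀⟩ := Finite.exists_max g
  have hF : (⨆ a, f a) = f a₀ :=
    le_antisymm (ciSup_le ha₀) (le_ciSup (Set.Finite.bddAbove (Set.finite_range f)) a₀)
  have hG : (⨆ b, g b) = g b₀ :=
    le_antisymm (ciSup_le hb₀) (le_ciSup (Set.Finite.bddAbove (Set.finite_range g)) b₀)
  rw [hF, hG]
  refine le_antisymm (ciSup_le fun p => mul_le_mul (ha₀ p.1) (hb₀ p.2) (hg p.2) (hf a₀)) ?_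
  exact le_ciSup (Set.Finite.bddAbove (Set.finite_range fun p : α × β => f p.1 * g p.2)) (a₀, b₀)

/-- Conservation of mutual coherence under Kronecker products (case `D = 2`):
for orthonormal bases `Φ_d`, `Ψ_d`,
`μ(Φ₁ ⊗ Φ₂, Ψ₁ ⊗ Ψ₂) = μ(Φ₁, Ψ₁) · μ(Φ₂, Ψ₂)`. -/
theorem mutualCoherence_kronecker {N₁ N₂ : ℕ} (hN₁ : 0 < N₁) (hN₂ : 0 < N₂)
    (Φ₁ Ψ₁ : Matrix (Fin N₁) (Fin N₁) ℝ) (Φ₂ Ψ₂ : Matrix (Fin N₂) (Fin N₂) ℝ)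
    (hΦ₁ : Φ₁.transpose * Φ₁ = 1) (hΨ₁ : Ψ₁.transpose * Ψ₁ = 1)
    (hΦ₂ : Φ₂.transpose * Φ₂ = 1) (hΨ₂ : Ψ₂.transpose * Ψ₂ = 1) :
    mutualCoherence (Φ₁ ⊗ₖ Φ₂) (Ψ₁ ⊗ₖ Ψ₂) =
      mutualCoherence Φ₁ Ψ₁ * mutualCoherence Φ₂ Ψ₂ := by
  haveI : NeZero N₁ := ⟨hN₁.ne'⟩
  haveI : NeZero N₂ := ⟨hN₂.ne'⟩
  unfold mutualCoherence
  have key : ∀ p : (Fin N₁ × Fin N₂) × (Fin N₁ × Fin N₂),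
      |∑ k, (Φ₁ ⊗ₖ Φ₂) k p.1 * (Ψ₁ ⊗ₖ Ψ₂) k p.2| =
      |∑ k, Φ₁ k p.1.1 * Ψ₁ k p.2.1| * |∑ k, Φ₂ k p.1.2 * Ψ₂ k p.2.2| := by
    intro p
    rw [← abs_mul]
    congr 1
    rw [Finset.sum_mul_sum, Fintype.sum_prod_type]
    refine Finset.sum_congr rfl fun i _ => Finset.sum_congr rfl fun j _ => ?_
    simp only [Matrix.kroneckerMap_apply]
    ring
  rw [show (⨆ p : (Fin N₁ × Fin N₂) × (Fin N₁ × Fin N₂),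
      |∑ k, (Φ₁ ⊗ₖ Φ₂) k p.1 * (Ψ₁ ⊗ₖ Ψ₂) k p.2|) =
      ⨆ q : (Fin N₁ × Fin N₁) × (Fin N₂ × Fin N₂),
      |∑ k, Φ₁ k q.1.1 * Ψ₁ k q.1.2| * |∑ k, Φ₂ k q.2.1 * Ψ₂ k q.2.2| from ?_]
  · exact ciSup_mul_ciSup (fun a : Fin N₁ × Fin N₁ => |∑ k, Φ₁ k a.1 * Ψ₁ k a.2|)
      (fun b : Fin N₂ × Fin N₂ => |∑ k, Φ₂ k b.1 * Ψ₂ k b.2|)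
      (fun _ => abs_nonneg _) (fun _ => abs_nonneg _)
  · rw [← (Equiv.prodProdProdComm (Fin N₁) (Fin N₂) (Fin N₁) (Fin N₂)).iSup_comp
      (g := fun q : (Fin N₁ × Fin N₁) × (Fin N₂ × Fin N₂) =>
        |∑ k, Φ₁ k q.1.1 * Ψ₁ k q.1.2| * |∑ k, Φ₂ k q.2.1 * Ψ₂ k q.2.2|)]
    exact iSup_congr fun p => key p
end

section
/- A sequence X[k] = Σ_{ℓ=1}^L a_ℓ u_ℓ^k with distinct nonzero u_ℓ and all a_ℓ ≠ 0 is uniquely determined by any 2L consecutive values X[k₀], ..., X[k₀+2L−1]: if two such parameterizations (with at most L terms each) agree on 2L consecutive indices, the sets of pairs {(u_ℓ, a_ℓ)} coincide. -/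
open Finset

/-- Half of the range-equality: if for every `z` the fiber sums of `a₁` over `u₁`
and of `a₂` over `u₂` agree, then the range of `(u₁, a₁)` is contained in that
of `(u₂, a₂)`. -/
lemma range_subset_of_fiber_sums {L₁ L₂ : ℕ}
    (u₁ : Fin L₁ → ℂ) (a₁ : Fin L₁ → ℂ) (u₂ : Fin L₂ → ℂ) (a₂ : Fin L₂ → ℂ)
    (hu₁ : Function.Injective u₁) (hu₂ : Function.Injective u₂)
    (ha₁ : ∀ ℓ, a₁ ℓ ≠ 0)
    (hsum : ∀ z : ℂ, ∑ ℓ ∈ univ.filter (fun ℓ => u₁ ℓ = z), a₁ ℓ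
      = ∑ ℓ ∈ univ.filter (fun ℓ => u₂ ℓ = z), a₂ ℓ) :
    Set.range (fun ℓ => (u₁ ℓ, a₁ ℓ)) ⊆ Set.range (fun ℓ => (u₂ ℓ, a₂ ℓ)) := by
  rintro p ⟨ℓ, rfl⟩
  have h1 : univ.filter (fun ℓ' => u₁ ℓ' = u₁ ℓ) = {ℓ} := by
    ext x; simp [hu₁.eq_iff]
  have h := hsum (u₁ ℓ)
  rw [h1, Finset.sum_singleton] at h
  have hne : (univ.filter (fun ℓ' => u₂ ℓ' = u₁ ℓ)).Nonempty := by
    by_contra hcon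
    rw [Finset.not_nonempty_iff_eq_empty] at hcon
    rw [hcon, Finset.sum_empty] at h
    exact ha₁ ℓ h
  obtain ⟨ℓ₂, hℓ₂⟩ := hne
  simp only [mem_filter, mem_univ, true_and] at hℓ₂
  have h2 : univ.filter (fun ℓ' => u₂ ℓ' = u₁ ℓ) = {ℓ₂} := by
    ext x; simp only [mem_filter, mem_univ, true_and, mem_singleton]
    constructor
    · intro hx; exact hu₂ (hx.trans hℓ₂.symm)
    · rintro rfl; exact hℓ₂
  rw [h2, Finset.sum_singleton] at h
  exact ⟨ℓ₂, by simp [hℓ₂, ← h]⟩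

/-- A sum of at most `L` exponentials with distinct nonzero bases and nonzero
amplitudes is uniquely determined by any `2L` consecutive values: if two such
parameterizations (with `L₁, L₂ ≤ L` terms) agree on `2L` consecutive indices,
the sets of (base, amplitude) pairs coincide. -/
theorem exponential_sum_unique {L L₁ L₂ : ℕ} (hL₁ : L₁ ≤ L) (hL₂ : L₂ ≤ L)
    (u₁ : Fin L₁ → ℂ) (a₁ : Fin L₁ → ℂ) (u₂ : Fin L₂ → ℂ) (a₂ : Fin L₂ → ℂ)
    (hu₁ : Function.Injective u₁) (hu₂ : Function.Injective u₂)
    (hu₁0 : ∀ ℓ, u₁ ℓ ≠ 0) (hu₂0 : ∀ ℓ, u₂ ℓ ≠ 0)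
    (ha₁ : ∀ ℓ, a₁ ℓ ≠ 0) (ha₂ : ∀ ℓ, a₂ ℓ ≠ 0)
    (k₀ : ℤ)
    (hagree : ∀ j : Fin (2 * L),
      ∑ ℓ, a₁ ℓ * u₁ ℓ ^ (k₀ + (j : ℕ)) = ∑ ℓ, a₂ ℓ * u₂ ℓ ^ (k₀ + (j : ℕ))) :
    Set.range (fun ℓ => (u₁ ℓ, a₁ ℓ)) = Set.range (fun ℓ => (u₂ ℓ, a₂ ℓ)) := by
  classical
  set s : Finset ℂ := (univ.image u₁) ∪ (univ.image u₂) with hs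
  have hs0 : ∀ z ∈ s, z ≠ 0 := by
    intro z hz
    simp only [hs, mem_union, mem_image, mem_univ, true_and] at hz
    rcases hz with ⟨ℓ, rfl⟩ | ⟨ℓ, rfl⟩
    · exact hu₁0 ℓ
    · exact hu₂0 ℓ
  have hcard : s.card ≤ 2 * L := by
    calc s.card ≤ (univ.image u₁).card + (univ.image u₂).card := Finset.card_union_le _ _
    _ ≤ L₁ + L₂ := by
        gcongr <;> exact (Finset.card_image_le.trans (by simp))
    _ ≤ 2 * L := by omega
  set c : ℂ → ℂ := fun z =>
    (∑ ℓ ∈ univ.filter (fun ℓ => u₁ ℓ = z), a₁ ℓ)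
      - (∑ ℓ ∈ univ.filter (fun ℓ => u₂ ℓ = z), a₂ ℓ) with hc
  -- reindexing: sums over s of fibered amplitudes recover the original sums
  have hre₁ : ∀ k : ℤ, ∑ z ∈ s, (∑ ℓ ∈ univ.filter (fun ℓ => u₁ ℓ = z), a₁ ℓ) * z ^ k
      = ∑ ℓ, a₁ ℓ * u₁ ℓ ^ k := by
    intro k
    rw [← Finset.sum_fiberwise_of_maps_to (g := u₁)
      (fun ℓ _ => mem_union_left _ (mem_image_of_mem _ (mem_univ ℓ)))]
    refine Finset.sum_congr rfl fun z _ => ?_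
    rw [Finset.sum_mul]
    refine Finset.sum_congr rfl fun ℓ hℓ => ?_
    simp only [mem_filter] at hℓ
    rw [hℓ.2]
  have hre₂ : ∀ k : ℤ, ∑ z ∈ s, (∑ ℓ ∈ univ.filter (fun ℓ => u₂ ℓ = z), a₂ ℓ) * z ^ k
      = ∑ ℓ, a₂ ℓ * u₂ ℓ ^ k := by
    intro k
    rw [← Finset.sum_fiberwise_of_maps_to (g := u₂)
      (fun ℓ _ => mem_union_right _ (mem_image_of_mem _ (mem_univ ℓ)))]
    refine Finset.sum_congr rfl fun z _ => ?_
    rw [Finset.sum_mul]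
    refine Finset.sum_congr rfl fun ℓ hℓ => ?_
    simp only [mem_filter] at hℓ
    rw [hℓ.2]
  -- the combined sum vanishes on the 2L consecutive indices
  have hvanish : ∀ j : ℕ, j < 2 * L → ∑ z ∈ s, (c z * z ^ k₀) * z ^ j = 0 := by
    intro j hj
    have hag := hagree ⟨j, hj⟩
    have : ∑ z ∈ s, c z * z ^ (k₀ + (j : ℕ)) = 0 := by
      simp only [hc, sub_mul, Finset.sum_sub_distrib, hre₁, hre₂]
      simpa using sub_eq_zero_of_eq hag
    rw [← this]
    refine Finset.sum_congr rfl fun z hz => ?_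
    rw [zpow_add₀ (hs0 z hz), mul_assoc, zpow_natCast]
  -- enumerate s and apply the Vandermonde kernel lemma
  set m := s.card with hm
  let e : s ≃ Fin m := s.equivFin
  let v : Fin m → ℂ := fun i => (e.symm i : ℂ)
  have hv : Function.Injective v := fun i j hij =>
    e.symm.injective (Subtype.ext hij)
  let b : Fin m → ℂ := fun i => c (v i) * (v i) ^ k₀
  have hb : ∀ i : Fin m, (∑ j : Fin m, b j * v j ^ (i : ℕ)) = 0 := by
    intro i
    have := hvanish i (lt_of_lt_of_le i.2 hcard)
    rw [← this]
    rw [← Finset.sum_attach s (fun z => (c z * z ^ k₀) * z ^ (i : ℕ))]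
    exact (Equiv.sum_comp e.symm (fun z : s => (c (z : ℂ) * (z : ℂ) ^ k₀) * (z : ℂ) ^ (i : ℕ))).symm ▸ rfl
  have hb0 : b = 0 := Matrix.eq_zero_of_forall_pow_sum_mul_pow_eq_zero hv hb
  -- hence c vanishes on s
  have hc0 : ∀ z ∈ s, c z = 0 := by
    intro z hz
    have : c (v (e ⟨z, hz⟩)) * (v (e ⟨z, hz⟩)) ^ k₀ = 0 := congrFun hb0 (e ⟨z, hz⟩)
    have hvz : v (e ⟨z, hz⟩) = z := by simp [v]
    rw [hvz] at this
    exact (mul_eq_zero.mp this).resolve_right (zpow_ne_zero _ (hs0 z hz))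
  -- fiber sums agree everywhere
  have hsum : ∀ z : ℂ, ∑ ℓ ∈ univ.filter (fun ℓ => u₁ ℓ = z), a₁ ℓ
      = ∑ ℓ ∈ univ.filter (fun ℓ => u₂ ℓ = z), a₂ ℓ := by
    intro z
    by_cases hz : z ∈ s
    · exact sub_eq_zero.mp (hc0 z hz)
    · have h1 : univ.filter (fun ℓ => u₁ ℓ = z) = ∅ := by
        rw [Finset.filter_eq_empty_iff]
        intro ℓ _ h; exact hz (by simp [hs, ← h])
      have h2 : univ.filter (fun ℓ => u₂ ℓ = z) = ∅ := by
        rw [Finset.filter_eq_empty_iff]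
        intro ℓ _ h; exact hz (by simp [hs, ← h])
      rw [h1, h2, Finset.sum_empty, Finset.sum_empty]
  exact Set.Subset.antisymm
    (range_subset_of_fiber_sums u₁ a₁ u₂ a₂ hu₁ hu₂ ha₁ hsum)
    (range_subset_of_fiber_sums u₂ a₂ u₁ a₁ hu₂ hu₁ ha₂ (fun z => (hsum z).symm))
end
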